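/- Let x, x̃ ∈ X, let z★ be a longest common subsequence of x and x̃, let ε★ ∈ E(x) and ε̃★ ∈ E(x̃) satisfy apply(x, ε★) = apply(x̃, ε̃★) = z★, and let ψ, ψ̃ ∈ (0,1). Then for every base classifier f̄ : X → Y and class y ∈ Y, p_y(x̃; f̄, ψ̃) = (ψ̃^{|x̃|} / ψ^{|x|}) · Σ_{ε ∈ E(x, ε★)} ρ(ψ, ψ̃)^{|ε|} · s_{f̄,ψ}(ε, x) + Σ_{ε̃ ∈ E(x̃) \ E(x̃, ε̃★)} s_{f̄,ψ̃}(ε̃, x̃), where ρ(ψ, ψ̃) := ψ(1−ψ̃)/(ψ̃(1−ψ)). -/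
import Mathlib


/-- Apply a deletion indicator: keep the tokens at positions `i` with `ε i = true`, in order. -/
def applyDel {Ω : Type*} (x : List Ω) (ε : Fin x.length → Bool) : List Ω :=
  (List.finRange x.length).filterMap fun i => if ε i then some (x.get i) else none

/-- Number of retained tokens `|ε|`. -/
def retained {n : ℕ} (ε : Fin n → Bool) : ℕ :=
  (Finset.univ.filter fun i => ε i = true).card

/-- `q_ψ(ε|x) = ψ^{|x|-|ε|} (1-ψ)^{|ε|}`. -/
noncomputable def qdel {Ω : Type*} (ψ : ℝ) (x : List Ω) (ε : Fin x.length → Bool) : ℝ :=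
  ψ ^ (x.length - retained ε) * (1 - ψ) ^ (retained ε)

/-- The score `s_{f̄,ψ}(ε, x) = q_ψ(ε|x)·1[f̄(apply(x,ε)) = y]`. -/
noncomputable def score {Ω Y : Type*} [DecidableEq Y] (f : List Ω → Y) (y : Y) (ψ : ℝ)
    (x : List Ω) (ε : Fin x.length → Bool) : ℝ :=
  qdel ψ x ε * (if f (applyDel x ε) = y then 1 else 0)

/-- The smoothed class probability `p_y(x; f̄, ψ) = Σ_{ε ∈ E(x)} s_{f̄,ψ}(ε, x)`. -/
noncomputable def smoothedProb {Ω Y : Type*} [DecidableEq Y] (f : List Ω → Y) (y : Y)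
    (ψ : ℝ) (x : List Ω) : ℝ :=
  ∑ ε : Fin x.length → Bool, score f y ψ x ε

lemma applyDel_cons {Ω : Type*} (a : Ω) (x : List Ω) (b : Bool) (ε : Fin x.length → Bool) :
    applyDel (a :: x) (Fin.cons b ε) = if b then a :: applyDel x ε else applyDel x ε := by
  unfold applyDel
  show (List.finRange (x.length + 1)).filterMap
      (fun i : Fin (x.length + 1) =>
        if (Fin.cons (α := fun _ => Bool) b ε) i = true then some ((a :: x).get i) else none) = _
  rw [List.finRange_succ, List.filterMap_cons, List.filterMap_map]
  cases b <;> simp [Fin.cons_zero] <;> congr 1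

lemma retained_cons {n : ℕ} (b : Bool) (ε : Fin n → Bool) :
    retained (Fin.cons b ε) = (if b then 1 else 0) + retained ε := by
  unfold retained
  rw [Finset.card_filter, Finset.card_filter, Fin.sum_univ_succ]
  simp [Fin.cons_succ, Fin.cons_zero]

lemma sum_cons_split {n : ℕ} (g : (Fin (n+1) → Bool) → ℝ) :
    ∑ ε : Fin (n+1) → Bool, g ε = ∑ b : Bool, ∑ ε : Fin n → Bool, g (Fin.cons b ε) := by
  rw [← (Fin.consEquiv (fun _ => Bool)).sum_comp g, Fintype.sum_prod_type]
  rfl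

lemma retained_le {n : ℕ} (ε : Fin n → Bool) : retained ε ≤ n := by
  calc retained ε ≤ Finset.univ.card := Finset.card_filter_le _ _
  _ = n := by simp

lemma cons_le_cons {n : ℕ} (c b : Bool) (ε e : Fin n → Bool) :
    (∀ j, Fin.cons (α := fun _ => Bool) c ε j ≤ Fin.cons (α := fun _ => Bool) b e j) ↔
      (c ≤ b ∧ ∀ j, ε j ≤ e j) := by
  constructor
  · intro h
    exact ⟨by simpa using h 0, fun j => by simpa [Fin.cons_succ] using h j.succ⟩
  · rintro ⟨h1, h2⟩ j
    cases j using Fin.cases with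
    | zero => simpa using h1
    | succ i => simpa [Fin.cons_succ] using h2 i

set_option maxHeartbeats 1000000 in
lemma lemA {Ω : Type*} : ∀ (x : List Ω) (F : ℕ → List Ω → ℝ) (e : Fin x.length → Bool),
    (∑ ε : Fin x.length → Bool, if ∀ j, ε j ≤ e j then F (retained ε) (applyDel x ε) else 0)
      = ∑ δ : Fin (applyDel x e).length → Bool, F (retained δ) (applyDel (applyDel x e) δ)
  | [], F, e => by
      have h0 : applyDel ([] : List Ω) e = [] := by simp [applyDel]
      rw [h0]
      simp [applyDel, retained]
  | a :: x, F, e => by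
      have hdec := Fin.cons_self_tail (n := x.length) (α := fun _ => Bool) e
      obtain ⟨b, e', rfl⟩ : ∃ (b : Bool) (e' : Fin x.length → Bool), e = Fin.cons b e' :=
        ⟨_, _, hdec.symm⟩
      rw [applyDel_cons]
      cases b with
      | false =>
        rw [if_neg (by simp)]
        calc (∑ ε : Fin (x.length + 1) → Bool,
                if ∀ j, ε j ≤ Fin.cons (α := fun _ => Bool) false e' j then F (retained ε) (applyDel (a :: x) ε) else 0)
            = ∑ c : Bool, ∑ ε : Fin x.length → Bool,
                (if ∀ j, Fin.cons (α := fun _ => Bool) c ε j ≤ Fin.cons (α := fun _ => Bool) false e' j then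
                  F (retained (Fin.cons c ε)) (applyDel (a :: x) (Fin.cons c ε)) else 0) :=
              sum_cons_split _
          _ = ∑ ε : Fin x.length → Bool,
                (if ∀ j, ε j ≤ e' j then F (retained ε) (applyDel x ε) else 0) := by
              rw [Fintype.sum_bool]
              simp only [cons_le_cons]
              simp [retained_cons, applyDel_cons, (show ¬((true:Bool) ≤ false) by decide)]
          _ = _ := lemA x F e'
      | true =>
        rw [if_pos rfl]
        calc (∑ ε : Fin (x.length + 1) → Bool,
                if ∀ j, ε j ≤ Fin.cons (α := fun _ => Bool) true e' j then F (retained ε) (applyDel (a :: x) ε) else 0)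
            = ∑ c : Bool, ∑ ε : Fin x.length → Bool,
                (if ∀ j, Fin.cons (α := fun _ => Bool) c ε j ≤ Fin.cons (α := fun _ => Bool) true e' j then
                  F (retained (Fin.cons c ε)) (applyDel (a :: x) (Fin.cons c ε)) else 0) :=
              sum_cons_split _
          _ = ∑ c : Bool, ∑ ε : Fin x.length → Bool,
                (if ∀ j, ε j ≤ e' j then
                  F ((if c then 1 else 0) + retained ε)
                    (if c then a :: applyDel x ε else applyDel x ε) else 0) := by
              refine Finset.sum_congr rfl fun c _ => Finset.sum_congr rfl fun ε _ => ?_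
              simp [cons_le_cons, retained_cons, applyDel_cons]
          _ = ∑ c : Bool, ∑ δ : Fin (applyDel x e').length → Bool,
                F ((if c then 1 else 0) + retained δ)
                  (if c then a :: applyDel (applyDel x e') δ else applyDel (applyDel x e') δ) := by
              refine Finset.sum_congr rfl fun c _ => ?_
              exact lemA x (fun k l => F ((if c then 1 else 0) + k) (if c then a :: l else l)) e'
          _ = ∑ δ : Fin ((applyDel x e').length + 1) → Bool,
                F (retained δ) (applyDel (a :: applyDel x e') δ) := by
              rw [sum_cons_split (fun δ : Fin ((applyDel x e').length + 1) → Bool =>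
                F (retained δ) (applyDel (a :: applyDel x e') δ))]
              refine Finset.sum_congr rfl fun c _ => Finset.sum_congr rfl fun δ _ => ?_
              rw [retained_cons, applyDel_cons]

lemma arith_key (ψ ψt : ℝ) (hψ0 : 0 < ψ) (hψ1 : ψ < 1) (hψt0 : 0 < ψt) (hψt1 : ψt < 1)
    {k n m : ℕ} (hkn : k ≤ n) (hkm : k ≤ m) (c : ℝ) :
    ψt ^ (m - k) * ((1 - ψt) ^ k * c) =
      ψt ^ m / ψ ^ n *
        ((ψ * (1 - ψt) / (ψt * (1 - ψ))) ^ k * (ψ ^ (n - k) * ((1 - ψ) ^ k * c))) := by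
  have hψne : ψ ≠ 0 := ne_of_gt hψ0
  have hψtne : ψt ≠ 0 := ne_of_gt hψt0
  have h1ψ : (1:ℝ) - ψ ≠ 0 := ne_of_gt (by linarith)
  have h1ψt : (1:ℝ) - ψt ≠ 0 := ne_of_gt (by linarith)
  rw [pow_sub₀ _ hψtne hkm, pow_sub₀ _ hψne hkn, div_pow, mul_pow, mul_pow]
  field_simp

/-- `z` is a longest common subsequence of `x` and `x̃`. -/
def IsLCS {Ω : Type*} (z x xt : List Ω) : Prop :=
  z.Sublist x ∧ z.Sublist xt ∧ ∀ w : List Ω, w.Sublist x → w.Sublist xt → w.length ≤ z.length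

set_option maxHeartbeats 2000000 in
/-- exact decomposition of the smoothed class probability at a neighboring input. -/
theorem stmt7 {Ω Y : Type*} [DecidableEq Y] (x xt zs : List Ω)
    (es : Fin x.length → Bool) (ets : Fin xt.length → Bool)
    (hz : IsLCS zs x xt)
    (h1 : applyDel x es = zs) (h2 : applyDel xt ets = zs)
    (ψ ψt : ℝ) (hψ : ψ ∈ Set.Ioo (0 : ℝ) 1) (hψt : ψt ∈ Set.Ioo (0 : ℝ) 1)
    (f : List Ω → Y) (y : Y) :
    smoothedProb f y ψt xt =
      ψt ^ xt.length / ψ ^ x.length *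
        (∑ ε ∈ Finset.univ.filter (fun ε : Fin x.length → Bool => ∀ j, ε j ≤ es j),
          (ψ * (1 - ψt) / (ψt * (1 - ψ))) ^ retained ε * score f y ψ x ε) +
      ∑ εt ∈ Finset.univ.filter (fun εt : Fin xt.length → Bool => ¬ ∀ j, εt j ≤ ets j),
          score f y ψt xt εt := by
  obtain ⟨hψ0, hψ1⟩ := hψ
  obtain ⟨hψt0, hψt1⟩ := hψt
  have hzx : zs.length ≤ x.length := by
    rw [← h1]
    simpa [applyDel] using List.length_filterMap_le
      (fun i => if es i then some (x.get i) else none) (List.finRange x.length)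
  have hzxt : zs.length ≤ xt.length := by
    rw [← h2]
    simpa [applyDel] using List.length_filterMap_le
      (fun i => if ets i then some (xt.get i) else none) (List.finRange xt.length)
  rw [smoothedProb, ← Finset.sum_filter_add_sum_filter_not Finset.univ
    (fun εt : Fin xt.length → Bool => ∀ j, εt j ≤ ets j) (score f y ψt xt)]
  congr 1
  calc (∑ εt ∈ Finset.univ.filter (fun εt : Fin xt.length → Bool => ∀ j, εt j ≤ ets j),
          score f y ψt xt εt)
      = ∑ εt : Fin xt.length → Bool, if (∀ j, εt j ≤ ets j) then
          (fun k l => ψt ^ (xt.length - k) * ((1 - ψt) ^ k * (if f l = y then 1 else 0)))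
            (retained εt) (applyDel xt εt) else 0 := by
        rw [Finset.sum_filter]
        refine Finset.sum_congr rfl fun εt _ => ?_
        simp only [score, qdel]
        ring_nf
    _ = ∑ δ : Fin (applyDel xt ets).length → Bool,
          (fun k l => ψt ^ (xt.length - k) * ((1 - ψt) ^ k * (if f l = y then 1 else 0)))
            (retained δ) (applyDel (applyDel xt ets) δ) :=
        lemA xt (fun k l => ψt ^ (xt.length - k) * ((1 - ψt) ^ k * (if f l = y then 1 else 0))) ets
    _ = ∑ δ : Fin zs.length → Bool,
          ψt ^ (xt.length - retained δ) *
            ((1 - ψt) ^ retained δ * (if f (applyDel zs δ) = y then 1 else 0)) := by rw [h2]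
    _ = ψt ^ xt.length / ψ ^ x.length * ∑ δ : Fin zs.length → Bool,
          (fun k l => (ψ * (1 - ψt) / (ψt * (1 - ψ))) ^ k *
            (ψ ^ (x.length - k) * ((1 - ψ) ^ k * (if f l = y then 1 else 0))))
            (retained δ) (applyDel zs δ) := by
        rw [Finset.mul_sum]
        refine Finset.sum_congr rfl fun δ _ => ?_
        exact arith_key ψ ψt hψ0 hψ1 hψt0 hψt1 (le_trans (retained_le δ) hzx)
          (le_trans (retained_le δ) hzxt) _
    _ = ψt ^ xt.length / ψ ^ x.length * ∑ δ : Fin (applyDel x es).length → Bool,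
          (fun k l => (ψ * (1 - ψt) / (ψt * (1 - ψ))) ^ k *
            (ψ ^ (x.length - k) * ((1 - ψ) ^ k * (if f l = y then 1 else 0))))
            (retained δ) (applyDel (applyDel x es) δ) := by rw [h1]
    _ = ψt ^ xt.length / ψ ^ x.length * ∑ ε : Fin x.length → Bool,
          (if ∀ j, ε j ≤ es j then
            (fun k l => (ψ * (1 - ψt) / (ψt * (1 - ψ))) ^ k *
              (ψ ^ (x.length - k) * ((1 - ψ) ^ k * (if f l = y then 1 else 0))))
              (retained ε) (applyDel x ε) else 0) := by
        rw [lemA x (fun k l => (ψ * (1 - ψt) / (ψt * (1 - ψ))) ^ k *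
          (ψ ^ (x.length - k) * ((1 - ψ) ^ k * (if f l = y then 1 else 0)))) es]
    _ = ψt ^ xt.length / ψ ^ x.length *
        (∑ ε ∈ Finset.univ.filter (fun ε : Fin x.length → Bool => ∀ j, ε j ≤ es j),
          (ψ * (1 - ψt) / (ψt * (1 - ψ))) ^ retained ε * score f y ψ x ε) := by
        congr 1
        rw [Finset.sum_filter]
        refine Finset.sum_congr rfl fun ε _ => ?_
        split
        · simp only [score, qdel]; ring
        · rfl
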